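/- Let H > 0, let I = (a,b) be a bounded open interval, let v ∈ C¹([a,b]) with min_{[a,b]} v > -H, and let M ≥ max{1, sup_{I}(H+v), sup_{I}|v'|}. Let P be continuously differentiable on the closure of O_I(v) with P(x,-H) = 0 for all x ∈ I and P(a,z) = 0 for all z ∈ (-H, v(a)). Then ‖P‖²_{L²(O_I(v))} ≤ 2M ‖∇P‖_{L¹(O_I(v))} ‖∂_z P‖_{L¹(O_I(v))}. -/

import Mathlib

/-!
Let `β x = ∫ |∂_z P(x, ·)|` over the column of `O_I(v)` at `x` and `α z = ∫ |∂_x P(·, z)|` over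
its row at height `z`. Integrating `∂_z P` up from the bottom gives `|P(x, z)| ≤ β x`. Going left
from `(x, z)`, the row leaves the region at a point `ξ` on the left edge, where `P = 0`, or on the
graph of `v`, where `|P(ξ, z)| ≤ β ξ`; hence `|P(x, z)| ≤ β ξ + α z` and
`P(x, z)² ≤ β x (β ξ + α z)`. Since `β a = 0`, only the heights with `ξ > a` matter; there
`v ξ = z`, so `|v'| ≤ M` makes `z ↦ ξ` expand distances by at least `1 / M`, and
`∫ β (ξ z) dz ≤ M ∫ β`. Integrating over the region,
`‖P‖₂² ≤ ‖∂_z P‖₁ (M ‖∂_z P‖₁ + ‖∂_x P‖₁) ≤ 2M ‖∇P‖₁ ‖∂_z P‖₁` since `M ≥ 1`.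
-/

open MeasureTheory Set

/-- The region between the bottom plate at height `-H` and the graph of `v` over
the interval `I = (a,b)`. -/
def OIv (H a b : ℝ) (v : ℝ → ℝ) : Set (ℝ × ℝ) :=
  {p : ℝ × ℝ | p.1 ∈ Set.Ioo a b ∧ -H < p.2 ∧ p.2 < v p.1}

open Filter Topology
open scoped ENNReal

section BoundedDerivative

variable {E F : Type*} [NormedAddCommGroup E] [NormedSpace ℝ E] [NormedAddCommGroup F]
  [NormedSpace ℝ F] {f : E → F} {D S : Set E}

lemma exists_mem_nhdsWithin_isBounded_image_fderiv (hD : IsOpen D) (hDS : D ⊆ S) {x : E}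
    (hx : x ∈ S) (hf : ContDiffWithinAt ℝ 1 f S x) :
    ∃ t ∈ 𝓝[S] x, Bornology.IsBounded (fderiv ℝ f '' (t ∩ D)) := by
  obtain ⟨u, hu, -, f', hf', hf'c⟩ :=
    (contDiffWithinAt_succ_iff_hasFDerivWithinAt (n := 0) (by simp)).1 (by simpa using hf)
  rw [insert_eq_of_mem hx] at hu
  obtain ⟨O, hO, hxO, hOu⟩ := mem_nhdsWithin.1 hu
  have hbound : ∀ᶠ y in 𝓝[u] x, ‖f' y‖ < ‖f' x‖ + 1 :=
    hf'c.continuousWithinAt.norm.eventually (gt_mem_nhds (lt_add_one _))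
  refine ⟨O ∩ u ∩ {y | ‖f' y‖ < ‖f' x‖ + 1},
    inter_mem (inter_mem (mem_nhdsWithin_of_mem_nhds (hO.mem_nhds hxO)) hu)
      (nhdsWithin_le_of_mem hu hbound), ?_⟩
  refine (Metric.isBounded_ball (x := (0 : E →L[ℝ] F)) (r := ‖f' x‖ + 1)).subset ?_
  rintro _ ⟨y, ⟨⟨⟨hyO, hyu⟩, hy⟩, hyD⟩, rfl⟩
  have hnhds : u ∈ 𝓝 y :=
    mem_of_superset ((hO.inter hD).mem_nhds ⟨hyO, hyD⟩) fun w hw => hOu ⟨hw.1, hDS hw.2⟩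
  rw [((hf' y hyu).hasFDerivAt hnhds).fderiv, mem_ball_zero_iff]
  exact hy

lemma isBounded_image_fderiv (hD : IsOpen D) (hDS : D ⊆ S) (hS : IsCompact S)
    (hf : ContDiffOn ℝ 1 f S) : Bornology.IsBounded (fderiv ℝ f '' D) := by
  suffices Bornology.IsBounded (fderiv ℝ f '' (S ∩ D)) by rwa [inter_eq_right.2 hDS] at this
  refine hS.induction_on (p := fun t => Bornology.IsBounded (fderiv ℝ f '' (t ∩ D))) (by simp)
    (fun s t hst ht => ht.subset (image_mono (inter_subset_inter_left _ hst)))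
    (fun s t hs ht => ?_)
    fun x hx => exists_mem_nhdsWithin_isBounded_image_fderiv hD hDS hx (hf x hx)
  rw [union_inter_distrib_right, image_union]
  exact hs.union ht

end BoundedDerivative

lemma integrableOn_fderiv_apply {E F : Type*} [NormedAddCommGroup E] [NormedSpace ℝ E]
    [ProperSpace E] [MeasurableSpace E] [OpensMeasurableSpace E] [NormedAddCommGroup F]
    [NormedSpace ℝ F] [CompleteSpace F] [SecondCountableTopology F] [MeasurableSpace F]
    [BorelSpace F]
    {μ : Measure E} [IsFiniteMeasureOnCompacts μ] {f : E → F} {D : Set E} (hD : IsOpen D)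
    (hDb : Bornology.IsBounded D) (hf : ContDiffOn ℝ 1 f (closure D)) (w : E) :
    IntegrableOn (fun p => fderiv ℝ f p w) D μ := by
  obtain ⟨C, hC⟩ :=
    (isBounded_image_fderiv hD subset_closure hDb.isCompact_closure hf).exists_norm_le
  refine Measure.integrableOn_of_bounded (hDb.measure_lt_top.ne)
    (measurable_fderiv_apply_const ℝ f w).aestronglyMeasurable (M := C * ‖w‖) ?_
  filter_upwards [ae_restrict_mem hD.measurableSet] with p hp
  exact (fderiv ℝ f p).le_of_opNorm_le (hC _ (mem_image_of_mem _ hp)) w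

lemma map_restrict_le_smul_volume {φ : ℝ → ℝ} {T : Set ℝ} {M : ℝ} (hφ : Measurable φ)
    (h : ∀ z ∈ T, ∀ z' ∈ T, dist z z' ≤ M * dist (φ z) (φ z')) :
    (volume.restrict T).map φ ≤ ENNReal.ofReal M • volume := by
  refine Measure.le_iff.2 fun A hA => ?_
  have hanti : AntilipschitzWith M.toNNReal fun z : T => φ z :=
    AntilipschitzWith.of_le_mul_dist fun z z' =>
      (h z z.2 z' z'.2).trans (mul_le_mul_of_nonneg_right (M.le_coe_toNNReal) dist_nonneg)
  rw [Measure.map_apply hφ hA, Measure.restrict_apply (hφ hA), Measure.smul_apply, smul_eq_mul,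
    ← hausdorffMeasure_real, inter_comm, ← Subtype.image_preimage_coe,
    isometry_subtype_coe.hausdorffMeasure_image (Or.inl zero_le_one)]
  calc _ ≤ (M.toNNReal : ℝ≥0∞) ^ (1 : ℝ) * μH[1] A :=
        hanti.hausdorffMeasure_preimage_le zero_le_one A
    _ = ENNReal.ofReal M * μH[1] A := by rw [ENNReal.rpow_one]; rfl

lemma setLIntegral_comp_le_of_dist_le {φ : ℝ → ℝ} {T : Set ℝ} {M : ℝ} (hφ : Measurable φ)
    (h : ∀ z ∈ T, ∀ z' ∈ T, dist z z' ≤ M * dist (φ z) (φ z')) {B : ℝ → ℝ≥0∞}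
    (hB : Measurable B) : ∫⁻ z in T, B (φ z) ≤ ENNReal.ofReal M * ∫⁻ s, B s := by
  rw [← lintegral_map hB hφ]
  exact (lintegral_mono' (map_restrict_le_smul_volume hφ h) le_rfl).trans_eq
    (lintegral_smul_measure _ _)

lemma integral_le_of_lintegral_le_mul_mul {α : Type*} [MeasurableSpace α] {μ : Measure α}
    {f g h : α → ℝ} {c : ℝ} (hc : 0 ≤ c) (hf : ∀ x, 0 ≤ f x) (hg : Integrable g μ)
    (hg0 : ∀ x, 0 ≤ g x) (hh : Integrable h μ) (hh0 : ∀ x, 0 ≤ h x)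
    (hle : ∫⁻ x, ENNReal.ofReal (f x) ∂μ ≤
      ENNReal.ofReal c * (∫⁻ x, ENNReal.ofReal (g x) ∂μ) * ∫⁻ x, ENNReal.ofReal (h x) ∂μ) :
    ∫ x, f x ∂μ ≤ c * (∫ x, g x ∂μ) * ∫ x, h x ∂μ := by
  have hrhs : 0 ≤ c * (∫ x, g x ∂μ) * ∫ x, h x ∂μ :=
    mul_nonneg (mul_nonneg hc (integral_nonneg hg0)) (integral_nonneg hh0)
  by_cases hfi : Integrable f μ
  · rw [← ENNReal.ofReal_le_ofReal_iff hrhs,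
      ENNReal.ofReal_mul (mul_nonneg hc (integral_nonneg hg0)), ENNReal.ofReal_mul hc]
    rwa [ofReal_integral_eq_lintegral_ofReal hfi (ae_of_all _ hf),
      ofReal_integral_eq_lintegral_ofReal hg (ae_of_all _ hg0),
      ofReal_integral_eq_lintegral_ofReal hh (ae_of_all _ hh0)]
  · rwa [integral_undef hfi]

lemma Integrable.sqrt_sq_add_sq {α : Type*} [MeasurableSpace α] {μ : Measure α} {f g : α → ℝ}
    (hf : Integrable f μ) (hg : Integrable g μ) : Integrable (fun x => √(f x ^ 2 + g x ^ 2)) μ := by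
  refine (hf.abs.add hg.abs).mono'
    (Real.continuous_sqrt.comp_aestronglyMeasurable
      ((hf.aestronglyMeasurable.pow 2).add (hg.aestronglyMeasurable.pow 2)))
    (ae_of_all _ fun x => ?_)
  rw [Real.norm_of_nonneg (Real.sqrt_nonneg _), Pi.add_apply, Real.sqrt_le_left (by positivity)]
  nlinarith [abs_nonneg (f x), abs_nonneg (g x), sq_abs (f x), sq_abs (g x)]

lemma bddAbove_insert_sep_Icc {α : Type*} [Preorder α] {a x : α} (hax : a ≤ x) (p : α → Prop) :
    BddAbove (insert a {s ∈ Icc a x | p s}) :=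
  ⟨x, by rintro s (rfl | hs); exacts [hax, hs.1.2]⟩

/-- Going left from `(x, z)`, the horizontal segment stays strictly below the graph of `v` on
`(leftExit v a x z, x]`: its left end is the last `s ≤ x` with `v s ≤ z`, or `a` if there is
none. -/
noncomputable def leftExit (v : ℝ → ℝ) (a x z : ℝ) : ℝ :=
  sSup (insert a {s ∈ Icc a x | v s ≤ z})

section LeftExit

variable {v : ℝ → ℝ} {a x z : ℝ}

lemma leftExit_mem_Icc (hax : a ≤ x) : leftExit v a x z ∈ Icc a x :=
  ⟨le_csSup (bddAbove_insert_sep_Icc hax _) (mem_insert a _),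
    csSup_le (insert_nonempty _ _) (by rintro s (rfl | hs); exacts [hax, hs.1.2])⟩

lemma monotone_leftExit (hax : a ≤ x) : Monotone (leftExit v a x) := fun _ _ hzz' =>
  csSup_le_csSup (bddAbove_insert_sep_Icc hax _) (insert_nonempty _ _)
    (insert_subset_insert fun _ hs => ⟨hs.1, hs.2.trans hzz'⟩)

lemma lt_apply_of_leftExit_lt {s : ℝ} (hax : a ≤ x) (hs : leftExit v a x z < s) (hsx : s ≤ x) :
    z < v s := by
  by_contra! hvs
  exact (le_csSup (bddAbove_insert_sep_Icc hax _) (mem_insert_of_mem _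
    ⟨⟨(leftExit_mem_Icc hax).1.trans hs.le, hsx⟩, hvs⟩)).not_gt hs

lemma leftExit_mem (hax : a ≤ x) (hv : ContinuousOn v (Icc a x)) :
    leftExit v a x z ∈ insert a {s ∈ Icc a x | v s ≤ z} := by
  refine IsClosed.csSup_mem ?_ (insert_nonempty _ _) (bddAbove_insert_sep_Icc hax _)
  rw [insert_eq]
  exact isClosed_singleton.union (hv.preimage_isClosed_of_isClosed isClosed_Icc isClosed_Iic)

lemma leftExit_lt (hax : a < x) (hv : ContinuousOn v (Icc a x)) (hz : z < v x) :
    leftExit v a x z < x := by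
  refine (leftExit_mem_Icc hax.le).2.lt_of_ne fun hx => ?_
  rcases leftExit_mem hax.le hv (z := z) with h | h
  · exact hax.ne (h ▸ hx)
  · exact (hx ▸ h.2).not_gt hz

lemma le_apply_leftExit (hax : a < x) (hv : ContinuousOn v (Icc a x)) (hz : z < v x) :
    z ≤ v (leftExit v a x z) := by
  set ξ := leftExit v a x z
  have hξx : ξ < x := leftExit_lt hax hv hz
  have hclosed : IsClosed {s ∈ Icc ξ x | z ≤ v s} :=
    (hv.mono (Icc_subset_Icc_left (leftExit_mem_Icc hax.le).1)).preimage_isClosed_of_isClosed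
      isClosed_Icc isClosed_Ici
  have hsub : Ioc ξ x ⊆ {s ∈ Icc ξ x | z ≤ v s} := fun s hs =>
    ⟨Ioc_subset_Icc_self hs, (lt_apply_of_leftExit_lt hax.le hs.1 hs.2).le⟩
  have hξ : ξ ∈ closure (Ioc ξ x) := by rw [closure_Ioc hξx.ne]; exact left_mem_Icc.2 hξx.le
  exact (hclosed.closure_subset_iff.2 hsub hξ).2

lemma apply_leftExit_eq (hax : a < x) (hv : ContinuousOn v (Icc a x)) (hz : z < v x)
    (ha : a < leftExit v a x z) : v (leftExit v a x z) = z := by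
  refine le_antisymm ?_ (le_apply_leftExit hax hv hz)
  rcases leftExit_mem hax.le hv (z := z) with h | h
  · exact absurd h ha.ne'
  · exact h.2

lemma setLIntegral_comp_leftExit_le {M : ℝ} (hax : a < x) (hv : ContinuousOn v (Icc a x))
    (hlip : ∀ s ∈ Ioo a x, ∀ s' ∈ Ioo a x, dist (v s) (v s') ≤ M * dist s s')
    {B : ℝ → ℝ≥0∞} (hB : Measurable B) (hBa : B a = 0) :
    ∫⁻ z in Iio (v x), B (leftExit v a x z) ≤ ENNReal.ofReal M * ∫⁻ s, B s := by
  have hmeas : Measurable (leftExit v a x) := (monotone_leftExit hax.le).measurable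
  set T := Iio (v x) ∩ {z | a < leftExit v a x z}
  have hT : MeasurableSet T := measurableSet_Iio.inter (measurableSet_lt measurable_const hmeas)
  have hmemIoo : ∀ z ∈ T, leftExit v a x z ∈ Ioo a x := fun z hz => ⟨hz.2, leftExit_lt hax hv hz.1⟩
  have hexp : ∀ z ∈ T, ∀ z' ∈ T, dist z z' ≤ M * dist (leftExit v a x z) (leftExit v a x z') := by
    intro z hz z' hz'
    simpa only [apply_leftExit_eq hax hv hz.1 hz.2, apply_leftExit_eq hax hv hz'.1 hz'.2] using
      hlip _ (hmemIoo z hz) _ (hmemIoo z' hz')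
  calc ∫⁻ z in Iio (v x), B (leftExit v a x z)
      ≤ ∫⁻ z in Iio (v x), T.indicator (fun z => B (leftExit v a x z)) z := by
        refine setLIntegral_mono' measurableSet_Iio fun z hz => ?_
        by_cases hzT : z ∈ T
        · rw [indicator_of_mem hzT]
        · have : leftExit v a x z = a :=
            le_antisymm (not_lt.1 fun h => hzT ⟨hz, h⟩) (leftExit_mem_Icc hax.le).1
          simp [this, hBa]
    _ ≤ ∫⁻ z in T, B (leftExit v a x z) :=
        (setLIntegral_le_lintegral _ _).trans_eq (lintegral_indicator hT _)
    _ ≤ ENNReal.ofReal M * ∫⁻ s, B s := setLIntegral_comp_le_of_dist_le hmeas hexp hB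

end LeftExit

noncomputable def partialX (P : ℝ × ℝ → ℝ) (p : ℝ × ℝ) : ℝ := deriv (fun t => P (t, p.2)) p.1

noncomputable def partialZ (P : ℝ × ℝ → ℝ) (p : ℝ × ℝ) : ℝ := deriv (fun z => P (p.1, z)) p.2

noncomputable def columnVariation (D : Set (ℝ × ℝ)) (P : ℝ × ℝ → ℝ) (x : ℝ) : ℝ≥0∞ :=
  ∫⁻ z, D.indicator (fun p => ‖partialZ P p‖ₑ) (x, z)

noncomputable def rowVariation (D : Set (ℝ × ℝ)) (P : ℝ × ℝ → ℝ) (z : ℝ) : ℝ≥0∞ :=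
  ∫⁻ x, D.indicator (fun p => ‖partialX P p‖ₑ) (x, z)

section PartialDerivatives

variable {P : ℝ × ℝ → ℝ} {D : Set (ℝ × ℝ)}

lemma partialX_eq_fderiv {p : ℝ × ℝ} (h : DifferentiableAt ℝ P p) :
    partialX P p = fderiv ℝ P p (1, 0) :=
  (h.hasFDerivAt.comp_hasDerivAt p.1 ((hasDerivAt_id p.1).prodMk (hasDerivAt_const p.1 p.2))).deriv

lemma partialZ_eq_fderiv {p : ℝ × ℝ} (h : DifferentiableAt ℝ P p) :
    partialZ P p = fderiv ℝ P p (0, 1) :=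
  (h.hasFDerivAt.comp_hasDerivAt p.2 ((hasDerivAt_const p.2 p.1).prodMk (hasDerivAt_id p.2))).deriv

lemma measurable_indicator_enorm_partialX (hD : IsOpen D) (hP : DifferentiableOn ℝ P D) :
    Measurable (D.indicator fun p => ‖partialX P p‖ₑ) := by
  rw [indicator_congr fun p hp => by rw [partialX_eq_fderiv (hP.differentiableAt (hD.mem_nhds hp))]]
  exact (measurable_fderiv_apply_const ℝ P _).enorm.indicator hD.measurableSet

lemma measurable_indicator_enorm_partialZ (hD : IsOpen D) (hP : DifferentiableOn ℝ P D) :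
    Measurable (D.indicator fun p => ‖partialZ P p‖ₑ) := by
  rw [indicator_congr fun p hp => by rw [partialZ_eq_fderiv (hP.differentiableAt (hD.mem_nhds hp))]]
  exact (measurable_fderiv_apply_const ℝ P _).enorm.indicator hD.measurableSet

lemma lintegral_columnVariation (hD : IsOpen D) (hP : DifferentiableOn ℝ P D) :
    ∫⁻ x, columnVariation D P x = ∫⁻ p in D, ‖partialZ P p‖ₑ := by
  rw [← lintegral_indicator hD.measurableSet, Measure.volume_eq_prod,
    lintegral_prod _ (measurable_indicator_enorm_partialZ hD hP).aemeasurable]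
  rfl

lemma lintegral_rowVariation (hD : IsOpen D) (hP : DifferentiableOn ℝ P D) :
    ∫⁻ z, rowVariation D P z = ∫⁻ p in D, ‖partialX P p‖ₑ := by
  rw [← lintegral_indicator hD.measurableSet, Measure.volume_eq_prod,
    lintegral_prod_symm _ (measurable_indicator_enorm_partialX hD hP).aemeasurable]
  rfl

lemma contDiffOn_Icc_comp (hP : ContDiffOn ℝ 1 P (closure D)) {γ : ℝ → ℝ × ℝ}
    (hγ : ContDiff ℝ 1 γ) {s t : ℝ} (hst : s < t) (h : MapsTo γ (Ioo s t) D) :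
    ContDiffOn ℝ 1 (P ∘ γ) (Icc s t) :=
  hP.comp hγ.contDiffOn (closure_Ioo hst.ne ▸ h.closure hγ.continuous)

lemma enorm_sub_le_columnVariation (hP : ContDiffOn ℝ 1 P (closure D)) {x s t : ℝ} (hst : s < t)
    (hD : ∀ r ∈ Ioo s t, (x, r) ∈ D) : ‖P (x, t) - P (x, s)‖ₑ ≤ columnVariation D P x := by
  calc ‖P (x, t) - P (x, s)‖ₑ ≤ ∫⁻ r in Icc s t, ‖deriv (fun r => P (x, r)) r‖ₑ :=
        enorm_sub_le_lintegral_deriv_of_contDiffOn_Icc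
          (contDiffOn_Icc_comp hP (by fun_prop) hst hD) hst.le
    _ = ∫⁻ r in Ioo s t, D.indicator (fun p => ‖partialZ P p‖ₑ) (x, r) := by
        rw [← restrict_Ioo_eq_restrict_Icc]
        exact setLIntegral_congr_fun measurableSet_Ioo fun r hr =>
          (indicator_of_mem (hD r hr) fun p => ‖partialZ P p‖ₑ).symm
    _ ≤ columnVariation D P x := setLIntegral_le_lintegral _ _

lemma enorm_sub_le_rowVariation (hP : ContDiffOn ℝ 1 P (closure D)) {z s t : ℝ} (hst : s < t)
    (hD : ∀ r ∈ Ioo s t, (r, z) ∈ D) : ‖P (t, z) - P (s, z)‖ₑ ≤ rowVariation D P z := by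
  calc ‖P (t, z) - P (s, z)‖ₑ ≤ ∫⁻ r in Icc s t, ‖deriv (fun r => P (r, z)) r‖ₑ :=
        enorm_sub_le_lintegral_deriv_of_contDiffOn_Icc
          (contDiffOn_Icc_comp hP (by fun_prop) hst hD) hst.le
    _ = ∫⁻ r in Ioo s t, D.indicator (fun p => ‖partialX P p‖ₑ) (r, z) := by
        rw [← restrict_Ioo_eq_restrict_Icc]
        exact setLIntegral_congr_fun measurableSet_Ioo fun r hr =>
          (indicator_of_mem (hD r hr) fun p => ‖partialX P p‖ₑ).symm
    _ ≤ rowVariation D P z := setLIntegral_le_lintegral _ _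

end PartialDerivatives

section Region

variable {H a b : ℝ} {v : ℝ → ℝ} {P : ℝ × ℝ → ℝ}

lemma isOpen_OIv (hv : ContinuousOn v (Icc a b)) : IsOpen (OIv H a b v) := by
  have hg : ContinuousOn (fun p : ℝ × ℝ => v p.1 - p.2) (Ioo a b ×ˢ Ioi (-H)) :=
    (hv.comp continuous_fst.continuousOn fun p hp => Ioo_subset_Icc_self hp.1).sub
      continuous_snd.continuousOn
  convert hg.isOpen_inter_preimage (isOpen_Ioo.prod isOpen_Ioi) (isOpen_Ioi (a := 0)) using 1
  ext p
  simp [OIv, and_assoc]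

lemma isBounded_OIv (hv : ContinuousOn v (Icc a b)) : Bornology.IsBounded (OIv H a b v) := by
  obtain ⟨c, hc⟩ := (isCompact_Icc.bddAbove_image hv : BddAbove (v '' Icc a b))
  exact (Metric.isBounded_Icc (a, -H) (b, c)).subset fun p hp => ⟨⟨hp.1.1.le, hp.2.1.le⟩,
    hp.1.2.le, hp.2.2.le.trans (hc (mem_image_of_mem v (Ioo_subset_Icc_self hp.1)))⟩

lemma mk_left_mem_closure_OIv (hab : a < b) (hv : ContinuousWithinAt v (Icc a b) a) {z : ℝ}
    (hz : z ∈ Ioo (-H) (v a)) : (a, z) ∈ closure (OIv H a b v) := by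
  have hvz : ∀ᶠ s in 𝓝[>] a, z < v s :=
    (hv.mono_of_mem_nhdsWithin (Icc_mem_nhdsGT hab)).eventually (lt_mem_nhds hz.2)
  refine mem_closure_of_tendsto (b := 𝓝[>] a)
    (((Continuous.prodMk_left z).tendsto a).mono_left nhdsWithin_le_nhds) ?_
  filter_upwards [Ioo_mem_nhdsGT hab, hvz] with s hs hvs
  exact ⟨hs, hz.1, hvs⟩

lemma apply_left_eq_zero (hab : a < b) (hv : ContinuousWithinAt v (Icc a b) a) (hva : -H < v a)
    (hP : ContinuousOn P (closure (OIv H a b v))) (hleft : ∀ z ∈ Ioo (-H) (v a), P (a, z) = 0)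
    {z : ℝ} (hz : z ∈ Ioc (-H) (v a)) : P (a, z) = 0 := by
  have hcont : ContinuousOn (fun z => P (a, z)) (Icc (-H) (v a)) := by
    refine hP.comp (Continuous.prodMk_right a).continuousOn ?_
    rw [← closure_Ioo hva.ne, ← closure_closure (s := OIv H a b v)]
    exact MapsTo.closure (fun z hz => mk_left_mem_closure_OIv hab hv hz)
      (Continuous.prodMk_right a)
  exact EqOn.of_subset_closure hleft hcont continuousOn_const Ioo_subset_Icc_self
    (closure_Ioo hva.ne).superset (Ioc_subset_Icc_self hz)

lemma enorm_le_columnVariation (hP : ContDiffOn ℝ 1 P (closure (OIv H a b v))) {x z : ℝ}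
    (hx : x ∈ Ioo a b) (hbot : P (x, -H) = 0) (hz : z ∈ Ioc (-H) (v x)) :
    ‖P (x, z)‖ₑ ≤ columnVariation (OIv H a b v) P x := by
  simpa [hbot] using
    enorm_sub_le_columnVariation hP hz.1 fun r hr => ⟨hx, hr.1, hr.2.trans_le hz.2⟩

lemma enorm_le_columnVariation_leftExit_add_rowVariation (hab : a < b)
    (hv : ContinuousOn v (Icc a b)) (hva : -H < v a) (hP : ContDiffOn ℝ 1 P (closure (OIv H a b v)))
    (hbot : ∀ x ∈ Ioo a b, P (x, -H) = 0) (hleft : ∀ z ∈ Ioo (-H) (v a), P (a, z) = 0)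
    {x z : ℝ} (hx : x ∈ Ioo a b) (hz : z ∈ Ioo (-H) (v x)) :
    ‖P (x, z)‖ₑ ≤ columnVariation (OIv H a b v) P (leftExit v a x z)
      + rowVariation (OIv H a b v) P z := by
  set ξ := leftExit v a x z
  have hvx : ContinuousOn v (Icc a x) := hv.mono (Icc_subset_Icc_right hx.2.le)
  have haξ : a ≤ ξ := (leftExit_mem_Icc hx.1.le).1
  have hξx : ξ < x := leftExit_lt hx.1 hvx hz.2
  have hfoot : ‖P (ξ, z)‖ₑ ≤ columnVariation (OIv H a b v) P ξ := by
    rcases haξ.eq_or_lt with h | h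
    · rw [← h, apply_left_eq_zero hab (hv a (left_mem_Icc.2 hab.le)) hva hP.continuousOn hleft
        ⟨hz.1, h ▸ le_apply_leftExit hx.1 hvx hz.2⟩, enorm_zero]
      exact zero_le
    · exact enorm_le_columnVariation hP ⟨h, hξx.trans hx.2⟩ (hbot ξ ⟨h, hξx.trans hx.2⟩)
        ⟨hz.1, (apply_leftExit_eq hx.1 hvx hz.2 h).ge⟩
  have hrow : ‖P (x, z) - P (ξ, z)‖ₑ ≤ rowVariation (OIv H a b v) P z :=
    enorm_sub_le_rowVariation hP hξx fun s hs =>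
      ⟨⟨haξ.trans_lt hs.1, hs.2.trans hx.2⟩, hz.1, lt_apply_of_leftExit_lt hx.1.le hs.1 hs.2.le⟩
  calc ‖P (x, z)‖ₑ = ‖P (ξ, z) + (P (x, z) - P (ξ, z))‖ₑ := by rw [add_sub_cancel]
    _ ≤ ‖P (ξ, z)‖ₑ + ‖P (x, z) - P (ξ, z)‖ₑ := enorm_add_le _ _
    _ ≤ _ := add_le_add hfoot hrow

lemma lintegral_indicator_OIv_mk {x : ℝ} (hx : x ∈ Ioo a b) (f : ℝ × ℝ → ℝ≥0∞) :
    ∫⁻ z, (OIv H a b v).indicator f (x, z) = ∫⁻ z in Ioo (-H) (v x), f (x, z) := by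
  rw [← lintegral_indicator measurableSet_Ioo]
  congr 1 with z
  simp [indicator, OIv, hx.1, hx.2]

lemma columnVariation_OIv_of_notMem {x : ℝ} (hx : x ∉ Ioo a b) :
    columnVariation (OIv H a b v) P x = 0 := by
  simp [columnVariation, indicator_of_notMem fun h : (x, _) ∈ OIv H a b v => hx h.1]

lemma setLIntegral_columnVariation_leftExit_add_rowVariation_le {M : ℝ}
    (hv : ContinuousOn v (Icc a b))
    (hlip : ∀ s ∈ Ioo a b, ∀ s' ∈ Ioo a b, dist (v s) (v s') ≤ M * dist s s')
    (hP : DifferentiableOn ℝ P (OIv H a b v)) {x : ℝ} (hx : x ∈ Ioo a b) :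
    ∫⁻ z in Ioo (-H) (v x),
        (columnVariation (OIv H a b v) P (leftExit v a x z) + rowVariation (OIv H a b v) P z) ≤
      ENNReal.ofReal M * (∫⁻ s, columnVariation (OIv H a b v) P s)
        + ∫⁻ z, rowVariation (OIv H a b v) P z := by
  have hmeas : Measurable (columnVariation (OIv H a b v) P) :=
    (measurable_indicator_enorm_partialZ (isOpen_OIv hv) hP).lintegral_prod_right'
  rw [lintegral_add_left (f := fun z => columnVariation _ P (leftExit v a x z))
    (hmeas.comp (monotone_leftExit hx.1.le).measurable)]
  refine add_le_add ((lintegral_mono_set (Ioo_subset_Iio_self (a := -H))).trans ?_)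
    (setLIntegral_le_lintegral _ _)
  exact setLIntegral_comp_leftExit_le hx.1 (hv.mono (Icc_subset_Icc_right hx.2.le))
    (fun s hs s' hs' => hlip s ⟨hs.1, hs.2.trans hx.2⟩ s' ⟨hs'.1, hs'.2.trans hx.2⟩) hmeas
    (columnVariation_OIv_of_notMem fun h => lt_irrefl a h.1)

lemma lintegral_slice_enorm_sq_le {M : ℝ} (hab : a < b) (hv : ContinuousOn v (Icc a b))
    (hva : -H < v a) (hlip : ∀ s ∈ Ioo a b, ∀ s' ∈ Ioo a b, dist (v s) (v s') ≤ M * dist s s')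
    (hP : ContDiffOn ℝ 1 P (closure (OIv H a b v))) (hbot : ∀ x ∈ Ioo a b, P (x, -H) = 0)
    (hleft : ∀ z ∈ Ioo (-H) (v a), P (a, z) = 0) (x : ℝ) :
    ∫⁻ z, (OIv H a b v).indicator (fun p => ‖P p‖ₑ ^ 2) (x, z) ≤
      columnVariation (OIv H a b v) P x * (ENNReal.ofReal M *
        (∫⁻ s, columnVariation (OIv H a b v) P s) + ∫⁻ z, rowVariation (OIv H a b v) P z) := by
  set D := OIv H a b v
  by_cases hx : x ∈ Ioo a b
  swap
  · simp [indicator_of_notMem fun h : (x, _) ∈ D => hx h.1]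
  have hD := isOpen_OIv (H := H) hv
  have hPd : DifferentiableOn ℝ P D := (hP.differentiableOn one_ne_zero).mono subset_closure
  have hmeas : Measurable fun z =>
      columnVariation D P (leftExit v a x z) + rowVariation D P z :=
    ((measurable_indicator_enorm_partialZ hD hPd).lintegral_prod_right'.comp
      (monotone_leftExit hx.1.le).measurable).add
      (measurable_indicator_enorm_partialX hD hPd).lintegral_prod_left'
  calc ∫⁻ z, D.indicator (fun p => ‖P p‖ₑ ^ 2) (x, z)
      = ∫⁻ z in Ioo (-H) (v x), ‖P (x, z)‖ₑ ^ 2 := lintegral_indicator_OIv_mk hx _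
    _ ≤ ∫⁻ z in Ioo (-H) (v x),
          columnVariation D P x * (columnVariation D P (leftExit v a x z) + rowVariation D P z) :=
        setLIntegral_mono' measurableSet_Ioo fun z hz => by
          rw [sq]
          exact mul_le_mul' (enorm_le_columnVariation hP hx (hbot x hx) ⟨hz.1, hz.2.le⟩)
            (enorm_le_columnVariation_leftExit_add_rowVariation hab hv hva hP hbot hleft hx hz)
    _ = columnVariation D P x * ∫⁻ z in Ioo (-H) (v x),
          (columnVariation D P (leftExit v a x z) + rowVariation D P z) :=
        lintegral_const_mul _ hmeas
    _ ≤ _ := by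
        gcongr
        exact setLIntegral_columnVariation_leftExit_add_rowVariation_le hv hlip hPd hx

lemma lintegral_enorm_sq_le {M : ℝ} (hab : a < b) (hv : ContinuousOn v (Icc a b))
    (hva : -H < v a) (hlip : ∀ s ∈ Ioo a b, ∀ s' ∈ Ioo a b, dist (v s) (v s') ≤ M * dist s s')
    (hP : ContDiffOn ℝ 1 P (closure (OIv H a b v))) (hbot : ∀ x ∈ Ioo a b, P (x, -H) = 0)
    (hleft : ∀ z ∈ Ioo (-H) (v a), P (a, z) = 0) :
    ∫⁻ p in OIv H a b v, ‖P p‖ₑ ^ 2 ≤ (∫⁻ p in OIv H a b v, ‖partialZ P p‖ₑ) *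
      (ENNReal.ofReal M * (∫⁻ p in OIv H a b v, ‖partialZ P p‖ₑ)
        + ∫⁻ p in OIv H a b v, ‖partialX P p‖ₑ) := by
  set D := OIv H a b v
  have hD := isOpen_OIv (H := H) hv
  have hPd : DifferentiableOn ℝ P D := (hP.differentiableOn one_ne_zero).mono subset_closure
  rw [← lintegral_columnVariation hD hPd, ← lintegral_rowVariation hD hPd,
    ← lintegral_indicator hD.measurableSet, Measure.volume_eq_prod]
  have hmeas : Measurable (columnVariation D P) :=
    (measurable_indicator_enorm_partialZ hD hPd).lintegral_prod_right'
  exact (lintegral_prod_le _).trans <|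
    (lintegral_mono fun x => lintegral_slice_enorm_sq_le hab hv hva hlip hP hbot hleft x).trans_eq
      (lintegral_mul_const _ hmeas)

lemma lintegral_sq_le_two_mul {M : ℝ} (hab : a < b) (hv : ContinuousOn v (Icc a b))
    (hva : -H < v a) (hM1 : 1 ≤ M)
    (hlip : ∀ s ∈ Ioo a b, ∀ s' ∈ Ioo a b, dist (v s) (v s') ≤ M * dist s s')
    (hP : ContDiffOn ℝ 1 P (closure (OIv H a b v))) (hbot : ∀ x ∈ Ioo a b, P (x, -H) = 0)
    (hleft : ∀ z ∈ Ioo (-H) (v a), P (a, z) = 0) :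
    ∫⁻ p in OIv H a b v, ENNReal.ofReal (P p ^ 2) ≤ ENNReal.ofReal (2 * M)
      * (∫⁻ p in OIv H a b v, ENNReal.ofReal √(partialX P p ^ 2 + partialZ P p ^ 2))
      * ∫⁻ p in OIv H a b v, ENNReal.ofReal |partialZ P p| := by
  set N := ∫⁻ p in OIv H a b v, ENNReal.ofReal √(partialX P p ^ 2 + partialZ P p ^ 2)
  have hXN : ∫⁻ p in OIv H a b v, ‖partialX P p‖ₑ ≤ N := lintegral_mono fun p => by
    rw [Real.enorm_eq_ofReal_abs]
    exact ENNReal.ofReal_le_ofReal (Real.abs_le_sqrt (le_add_of_nonneg_right (sq_nonneg _)))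
  have hZN : ∫⁻ p in OIv H a b v, ‖partialZ P p‖ₑ ≤ N := lintegral_mono fun p => by
    rw [Real.enorm_eq_ofReal_abs]
    exact ENNReal.ofReal_le_ofReal (Real.abs_le_sqrt (le_add_of_nonneg_left (sq_nonneg _)))
  have hM : 1 ≤ ENNReal.ofReal M := by simpa using ENNReal.ofReal_le_ofReal hM1
  simp_rw [← Real.enorm_eq_ofReal_abs, ← sq_abs (P _), ENNReal.ofReal_pow (abs_nonneg _),
    ← Real.enorm_eq_ofReal_abs]
  calc ∫⁻ p in OIv H a b v, ‖P p‖ₑ ^ 2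
      ≤ (∫⁻ p in OIv H a b v, ‖partialZ P p‖ₑ) * (ENNReal.ofReal M * N + ENNReal.ofReal M * N) := by
        refine (lintegral_enorm_sq_le hab hv hva hlip hP hbot hleft).trans ?_
        gcongr
        exact hXN.trans (le_mul_of_one_le_left' hM)
    _ = _ := by
        rw [← two_mul, ENNReal.ofReal_mul zero_le_two, ENNReal.ofReal_ofNat]
        ring

end Region

theorem stmt_7_general (H a b M : ℝ) (hab : a < b) (v : ℝ → ℝ)
    (hv : ContDiffOn ℝ 1 v (Icc a b)) (hvH : ∀ x ∈ Icc a b, -H < v x)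
    (hM1 : 1 ≤ M)
    (hM3 : ∀ x ∈ Ioo a b, |deriv v x| ≤ M)
    (P : ℝ × ℝ → ℝ) (hP : ContDiffOn ℝ 1 P (closure (OIv H a b v)))
    (hbot : ∀ x ∈ Ioo a b, P (x, -H) = 0)
    (hleft : ∀ z ∈ Ioo (-H) (v a), P (a, z) = 0) :
    ∫ p in OIv H a b v, (P p) ^ 2 ≤
      2 * M
        * (∫ p in OIv H a b v,
            Real.sqrt ((deriv (fun t => P (t, p.2)) p.1) ^ 2
              + (deriv (fun z => P (p.1, z)) p.2) ^ 2))
        * (∫ p in OIv H a b v, |deriv (fun z => P (p.1, z)) p.2|) := by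
  have hvc : ContinuousOn v (Icc a b) := hv.continuousOn
  have hD := isOpen_OIv (H := H) hvc
  have hPd : ∀ p ∈ OIv H a b v, DifferentiableAt ℝ P p := fun p hp =>
    ((hP.differentiableOn one_ne_zero).mono subset_closure).differentiableAt (hD.mem_nhds hp)
  have hX : IntegrableOn (partialX P) (OIv H a b v) :=
    (integrableOn_fderiv_apply hD (isBounded_OIv hvc) hP (1, 0)).congr_fun
      (fun p hp => (partialX_eq_fderiv (hPd p hp)).symm) hD.measurableSet
  have hZ : IntegrableOn (partialZ P) (OIv H a b v) :=
    (integrableOn_fderiv_apply hD (isBounded_OIv hvc) hP (0, 1)).congr_fun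
      (fun p hp => (partialZ_eq_fderiv (hPd p hp)).symm) hD.measurableSet
  have hlip : ∀ s ∈ Ioo a b, ∀ s' ∈ Ioo a b, dist (v s) (v s') ≤ M * dist s s' :=
    fun s hs s' hs' => (convex_Ioo a b).norm_image_sub_le_of_norm_deriv_le
      (fun x hx => (hv.differentiableOn one_ne_zero x (Ioo_subset_Icc_self hx)).differentiableAt
        (Icc_mem_nhds hx.1 hx.2)) hM3 hs' hs
  exact integral_le_of_lintegral_le_mul_mul (by linarith) (fun _ => sq_nonneg _)
    (Integrable.sqrt_sq_add_sq hX hZ) (fun _ => Real.sqrt_nonneg _) hZ.abs (fun _ => abs_nonneg _)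
    (lintegral_sq_le_two_mul hab hvc (hvH a (left_mem_Icc.2 hab.le)) hM1 hlip hP hbot hleft)

/-- Poincaré-type inequality for functions `P ∈ H¹_{WS}(O_I(v))`, i.e. `C¹` functions
on the closure of `O_I(v)` vanishing on the bottom edge and on the left edge:
`‖P‖²_{L²} ≤ 2M ‖∇P‖_{L¹} ‖∂_z P‖_{L¹}` with `M ≥ max{1, sup(H+v), sup|v'|}`. -/
theorem stmt_7 (H a b M : ℝ) (hH : 0 < H) (hab : a < b) (v : ℝ → ℝ)
    (hv : ContDiffOn ℝ 1 v (Icc a b)) (hvH : ∀ x ∈ Icc a b, -H < v x)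
    (hM1 : 1 ≤ M) (hM2 : ∀ x ∈ Ioo a b, H + v x ≤ M)
    (hM3 : ∀ x ∈ Ioo a b, |deriv v x| ≤ M)
    (P : ℝ × ℝ → ℝ) (hP : ContDiffOn ℝ 1 P (closure (OIv H a b v)))
    (hbot : ∀ x ∈ Ioo a b, P (x, -H) = 0)
    (hleft : ∀ z ∈ Ioo (-H) (v a), P (a, z) = 0) :
    ∫ p in OIv H a b v, (P p) ^ 2 ≤
      2 * M
        * (∫ p in OIv H a b v,
            Real.sqrt ((deriv (fun t => P (t, p.2)) p.1) ^ 2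
              + (deriv (fun z => P (p.1, z)) p.2) ^ 2))
        * (∫ p in OIv H a b v, |deriv (fun z => P (p.1, z)) p.2|) :=
  stmt_7_general H a b M hab v hv hvH hM1 hM3 P hP hbot hleft
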